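/- Let h: ℕ→ℕ be a strictly increasing function, α < ε₀ an ordinal, and n > 0. If ⟨α₀,n₀⟩, ⟨α₁,n₁⟩, …, ⟨α_ℓ,n_ℓ⟩ is a Hardy computation for h^α(n), then for all 0 ≤ i ≤ ℓ, the size of the term denoting α_i is bounded by |α_i| ≤ G_α(n_ℓ). -/

import Mathlib

/-!
Let `oeval o x` be the natural number obtained from the notation `o` by replacing `ω` with
`x + 1`. Along a fundamental sequence, `oeval (o(i)) x` is monotone in `i` and equals
`oeval o x` at `i = x`, while a successor `a + 1` evaluates to `oeval a x + 1`. Hence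
`G_o(x) = oeval o x`, and `P_x` does not increase `oeval · y` for any `y ≥ x`. Since the `n_i`
of a Hardy computation increase,
`|α_i| ≤ oeval α_i 1 ≤ oeval α_i n_ℓ ≤ oeval α n_ℓ = G_α(n_ℓ)`,
where the first inequality comes from `1 + k ≤ 2 ^ k`.
-/

open ONote Ordinal

/-- The slow-growing hierarchy `G_α`: `G_0(x) = 0`, `G_{α+1}(x) = 1 + G_α(x)`,
`G_λ(x) = G_{λ(x)}(x)`. -/
def SlowG : ONote → ℕ → ℕ
  | o =>
    match fundamentalSequence o, fundamentalSequence_has_prop o with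
    | Sum.inl none, _ => fun _ => 0
    | Sum.inl (some a), hp =>
      have : a < o := by rw [lt_def, hp.1]; exact Order.lt_succ _
      fun x => 1 + SlowG a x
    | Sum.inr f, hp => fun x =>
      have : f x < o := (hp.2.1 x).2.1
      SlowG (f x) x
  termination_by o => o

/-- The predecessor `P_x(α)` of an ordinal `α > 0` at `x`: `P_x(α+1) = α`,
`P_x(λ) = P_x(λ(x))`. -/
def opred (x : ℕ) : ONote → ONote
  | o =>
    match fundamentalSequence o, fundamentalSequence_has_prop o with
    | Sum.inl none, _ => 0
    | Sum.inl (some a), _ => a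
    | Sum.inr f, hp =>
      have : f x < o := (hp.2.1 x).2.1
      opred x (f x)
  termination_by o => o

/-- The size `|α|` of the term denoting `α`: `|0| = 0`, `|ω^α| = 1 + |α|`,
`|α + α'| = |α| + |α'|`. -/
def osize : ONote → ℕ
  | ONote.zero => 0
  | ONote.oadd e n a => (n : ℕ) * (1 + osize e) + osize a

def oeval : ONote → ℕ → ℕ
  | 0, _ => 0
  | oadd e n a, x => n * (x + 1) ^ oeval e x + oeval a x

theorem eq_zero_of_fundamentalSequence_inl_none {o : ONote}
    (h : fundamentalSequence o = Sum.inl none) : o = 0 := by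
  have := fundamentalSequence_has_prop o
  rwa [h] at this

theorem oeval_of_fundamentalSequence_inl_some {o a : ONote}
    (h : fundamentalSequence o = Sum.inl (some a)) (x : ℕ) : oeval o x = oeval a x + 1 := by
  induction o generalizing a with
  | zero => simp [fundamentalSequence] at h
  | oadd e m b _ ihb =>
    obtain ⟨k, rfl⟩ : ∃ k, m = k.succPNat := ⟨m.natPred, m.succPNat_natPred.symm⟩
    rcases hb : fundamentalSequence b with (_ | b') | g
    · obtain rfl := eq_zero_of_fundamentalSequence_inl_none hb
      rcases he : fundamentalSequence e with (_ | e') | g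
      · obtain rfl := eq_zero_of_fundamentalSequence_inl_none he
        cases k <;>
          simp only [fundamentalSequence, Nat.natPred_succPNat, zero_def, Sum.inl.injEq,
            Option.some.injEq] at h <;>
          subst h <;> simp [oeval]
      all_goals cases k <;> simp [fundamentalSequence, he] at h
    · simp only [fundamentalSequence, hb, Sum.inl.injEq, Option.some.injEq] at h
      subst h
      simp [oeval, ihb hb, add_assoc]
    · simp [fundamentalSequence, hb] at h

theorem oeval_of_fundamentalSequence_inr {o : ONote} {f : ℕ → ONote}
    (h : fundamentalSequence o = Sum.inr f) (x : ℕ) : oeval (f x) x = oeval o x := by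
  induction o generalizing f with
  | zero => simp [fundamentalSequence] at h
  | oadd e m b ihe ihb =>
    obtain ⟨k, rfl⟩ : ∃ k, m = k.succPNat := ⟨m.natPred, m.succPNat_natPred.symm⟩
    rcases hb : fundamentalSequence b with (_ | b') | g
    · obtain rfl := eq_zero_of_fundamentalSequence_inl_none hb
      rcases he : fundamentalSequence e with (_ | e') | g
      · cases k <;> simp [fundamentalSequence, he] at h
      all_goals
        cases k <;>
          simp only [fundamentalSequence, he, Nat.natPred_succPNat, zero_def,
            Sum.inr.injEq] at h <;>
          subst h
      -- `ω^(e'+1)` has fundamental sequence `ω^e' · (i+1)`, whose `x`-th term evaluates to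
      -- `(x+1) · (x+1)^(oeval e' x) = (x+1)^(oeval e x)`.
      · simp [oeval, oeval_of_fundamentalSequence_inl_some he, pow_succ, mul_comm]
      · simp [oeval, oeval_of_fundamentalSequence_inl_some he, pow_succ]
        ring
      · simp [oeval, ihe he]
      · simp [oeval, ihe he, add_one_mul]
    · simp [fundamentalSequence, hb] at h
    · simp only [fundamentalSequence, hb, Sum.inr.injEq] at h
      subst h
      simp [oeval, ihb hb]

theorem monotone_oeval_of_fundamentalSequence_inr {o : ONote} {f : ℕ → ONote}
    (h : fundamentalSequence o = Sum.inr f) (x : ℕ) : Monotone fun i => oeval (f i) x := by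
  induction o generalizing f with
  | zero => simp [fundamentalSequence] at h
  | oadd e m b ihe ihb =>
    obtain ⟨k, rfl⟩ : ∃ k, m = k.succPNat := ⟨m.natPred, m.succPNat_natPred.symm⟩
    rcases hb : fundamentalSequence b with (_ | b') | g
    · obtain rfl := eq_zero_of_fundamentalSequence_inl_none hb
      rcases he : fundamentalSequence e with (_ | e') | g
      · cases k <;> simp [fundamentalSequence, he] at h
      all_goals
        cases k <;>
          simp only [fundamentalSequence, he, Nat.natPred_succPNat, zero_def,
            Sum.inr.injEq] at h <;>
          subst h <;> intro i j hij <;> simp only [oeval, Nat.succPNat_coe, PNat.one_coe]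
      all_goals gcongr
      all_goals first | omega | exact ihe he hij
    · simp [fundamentalSequence, hb] at h
    · simp only [fundamentalSequence, hb, Sum.inr.injEq] at h
      subst h
      exact fun i j hij => Nat.add_le_add_left (ihb hb hij) _

theorem SlowG_zero' {o : ONote} (h : fundamentalSequence o = Sum.inl none) (x : ℕ) :
    SlowG o x = 0 := by
  rw [SlowG]; generalize_proofs hp; revert hp; rw [h]; intro; rfl

theorem SlowG_succ {o a : ONote} (h : fundamentalSequence o = Sum.inl (some a)) (x : ℕ) :
    SlowG o x = 1 + SlowG a x := by
  rw [SlowG]; generalize_proofs hp; revert hp; rw [h]; intro; rfl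

theorem SlowG_limit {o : ONote} {f : ℕ → ONote} (h : fundamentalSequence o = Sum.inr f)
    (x : ℕ) :
    SlowG o x = SlowG (f x) x := by
  rw [SlowG]; generalize_proofs hp; revert hp; rw [h]; intro; rfl

theorem opred_zero' {o : ONote} (h : fundamentalSequence o = Sum.inl none) (x : ℕ) :
    opred x o = 0 := by
  rw [opred]; generalize_proofs hp; revert hp; rw [h]; intro; rfl

theorem opred_succ {o a : ONote} (h : fundamentalSequence o = Sum.inl (some a)) (x : ℕ) :
    opred x o = a := by
  rw [opred]; generalize_proofs hp; revert hp; rw [h]; intro; rfl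

theorem opred_limit {o : ONote} {f : ℕ → ONote} (h : fundamentalSequence o = Sum.inr f)
    (x : ℕ) :
    opred x o = opred x (f x) := by
  rw [opred]; generalize_proofs hp; revert hp; rw [h]; intro; rfl

theorem SlowG_eq_oeval (o : ONote) (x : ℕ) : SlowG o x = oeval o x := by
  induction o using SlowG.induct generalizing x with
  | case1 o _ hp h => rw [SlowG_zero' h, show o = 0 from hp]; rfl
  | case2 o _ a _ h _ ih =>
    rw [SlowG_succ h, ih, oeval_of_fundamentalSequence_inl_some h, add_comm]
  | case3 o _ f _ h ih => rw [SlowG_limit h, ih, oeval_of_fundamentalSequence_inr h]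

theorem oeval_opred_le {x y : ℕ} (hxy : x ≤ y) (o : ONote) :
    oeval (opred x o) y ≤ oeval o y := by
  induction o using opred.induct (x := x) with
  | case1 o _ _ h => rw [opred_zero' h]; exact Nat.zero_le _
  | case2 o _ a _ h =>
    rw [opred_succ h, oeval_of_fundamentalSequence_inl_some h]
    exact Nat.le_succ _
  | case3 o _ f _ h _ ih =>
    calc oeval (opred x o) y = oeval (opred x (f x)) y := by rw [opred_limit h]
      _ ≤ oeval (f x) y := ih
      _ ≤ oeval (f y) y := monotone_oeval_of_fundamentalSequence_inr h y hxy
      _ = oeval o y := oeval_of_fundamentalSequence_inr h y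

theorem oeval_mono (o : ONote) : Monotone (oeval o) := by
  intro x y hxy
  induction o with
  | zero => rfl
  | oadd e n a ihe iha =>
    simp only [oeval]
    gcongr
    omega

theorem osize_le_oeval_one (o : ONote) : osize o ≤ oeval o 1 := by
  induction o with
  | zero => rfl
  | oadd e n a ihe iha =>
    have : 1 + osize e ≤ 2 ^ oeval e 1 := by
      have := Nat.lt_two_pow_self (n := oeval e 1)
      omega
    simp only [osize, oeval]
    gcongr

section HardyComputation

variable {h : ℕ → ℕ} {ℓ : ℕ} {aseq : ℕ → ONote} {nseq : ℕ → ℕ}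
  (hstep : ∀ i < ℓ, aseq (i + 1) = opred (nseq i) (aseq i) ∧ nseq (i + 1) = h (nseq i))
include hstep

theorem nseq_le_nseq_last (hh : ∀ x, x ≤ h x) {j : ℕ} (hj : j ≤ ℓ) :
    nseq j ≤ nseq ℓ := by
  suffices ∀ k, j ≤ k → k ≤ ℓ → nseq j ≤ nseq k from this ℓ hj le_rfl
  refine Nat.le_induction (fun _ => le_rfl) fun k _ ih hk => ?_
  rw [(hstep k hk).2]
  exact (ih (by omega)).trans (hh _)

theorem oeval_aseq_le_oeval_aseq_zero (hh : ∀ x, x ≤ h x) {j : ℕ} (hj : j ≤ ℓ) :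
    oeval (aseq j) (nseq ℓ) ≤ oeval (aseq 0) (nseq ℓ) := by
  induction j with
  | zero => rfl
  | succ j ih =>
    rw [(hstep j hj).1]
    exact (oeval_opred_le (nseq_le_nseq_last hstep hh (by omega)) _).trans (ih (by omega))

end HardyComputation

theorem hardy_computation_size_le_general (h : ℕ → ℕ) (hh : StrictMono h) (α : ONote)
    (n : ℕ) (hn : 0 < n) (ℓ : ℕ) (aseq : ℕ → ONote) (nseq : ℕ → ℕ)
    (h0 : aseq 0 = α) (hn0 : nseq 0 = n)
    (hstep : ∀ i < ℓ, aseq (i + 1) = opred (nseq i) (aseq i) ∧ nseq (i + 1) = h (nseq i))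
    (i : ℕ) (hi : i ≤ ℓ) :
    osize (aseq i) ≤ SlowG α (nseq ℓ) := by
  have hle : ∀ x, x ≤ h x := fun _ => hh.le_apply
  have hpos : 0 < nseq ℓ := (hn0 ▸ hn).trans_le (nseq_le_nseq_last hstep hle (Nat.zero_le ℓ))
  calc osize (aseq i) ≤ oeval (aseq i) 1 := osize_le_oeval_one _
    _ ≤ oeval (aseq i) (nseq ℓ) := oeval_mono _ hpos
    _ ≤ oeval α (nseq ℓ) := h0 ▸ oeval_aseq_le_oeval_aseq_zero hstep hle hi
    _ = SlowG α (nseq ℓ) := (SlowG_eq_oeval α _).symm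

/-- Let `h : ℕ → ℕ` be strictly increasing, `α < ε₀` and `n > 0`.  If
`⟨α₀,n₀⟩, …, ⟨α_ℓ,n_ℓ⟩` is a Hardy computation for `h^α(n)` (i.e. `α₀ = α`, `n₀ = n`,
`α_ℓ = 0` and, for `0 < i ≤ ℓ`, `α_i = P_(n_(i-1))(α_(i-1))` and `n_i = h(n_(i-1))`), then
for all `0 ≤ i ≤ ℓ`, `|α_i| ≤ G_α(n_ℓ)`. -/
theorem hardy_computation_size_le (h : ℕ → ℕ) (hh : StrictMono h) (α : ONote) (hNF : α.NF)
    (n : ℕ) (hn : 0 < n) (ℓ : ℕ) (aseq : ℕ → ONote) (nseq : ℕ → ℕ)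
    (h0 : aseq 0 = α) (hn0 : nseq 0 = n) (hl : aseq ℓ = 0)
    (hstep : ∀ i < ℓ, aseq (i + 1) = opred (nseq i) (aseq i) ∧ nseq (i + 1) = h (nseq i))
    (i : ℕ) (hi : i ≤ ℓ) :
    osize (aseq i) ≤ SlowG α (nseq ℓ) :=
  hardy_computation_size_le_general h hh α n hn ℓ aseq nseq h0 hn0 hstep i hi
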